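/- arXiv:1401.6090 — 7 statements merged into one kernel-verified Lean document; each statement's English description precedes it below -/
import Mathlib

section
/- Let A, B ∈ Mₙ(ℂ) be positive definite Hermitian matrices and suppose B is an exact interpolation matrix for A, i.e., for every T ∈ Mₙ(ℂ), TᴴT ≤ I and TᴴAT ≤ A imply TᴴBT ≤ B (Loewner order). Then B commutes with every orthogonal projection that commutes with A, and there exists a function h : (0,∞) → (0,∞) such that B = h(A), where h(A) is obtained by applying h to each eigenvalue of A in a spectral decomposition. -/
open Matrix MeasureTheory
open scoped ComplexOrder

/-- Loewner order on complex `n × n` matrices: `LoewnerLE A B` iff `B - A` is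
positive semidefinite (i.e. `A ≤ B`). -/
def LoewnerLE {n : ℕ} (A B : Matrix (Fin n) (Fin n) ℂ) : Prop := (B - A).PosSemidef

/-- Functional calculus for Hermitian matrices: apply `h : ℝ → ℝ` to each eigenvalue
in a spectral decomposition of `A` (junk value `0` for non-Hermitian input). -/
noncomputable def matFunCalc {n : ℕ} (h : ℝ → ℝ) (A : Matrix (Fin n) (Fin n) ℂ) :
    Matrix (Fin n) (Fin n) ℂ :=
  if hA : A.IsHermitian then
    (hA.eigenvectorUnitary : Matrix (Fin n) (Fin n) ℂ) *
      diagonal (fun i => (h (hA.eigenvalues i) : ℂ)) *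
      star (hA.eigenvectorUnitary : Matrix (Fin n) (Fin n) ℂ)
  else 0

/-!
If `P` is an orthogonal projection commuting with `A`, the reflection `T = 2P - 1` is a
self-adjoint unitary commuting with `A`, so exactness gives `TBT ≤ B`; conjugating this by `T`
gives `B ≤ TBT`, hence `TBT = B` and `B` commutes with `P`.

Write `A = U D U*` with `D` diagonal and put `C = U* B U`. Then `C` commutes with every orthogonal
projection commuting with `D`, in particular with the projection onto any vector supported on an
eigenspace of `D`, so every such vector is an eigenvector of `C`. Testing this on `eᵢ` and on
`eᵢ + eⱼ` shows that `C` is diagonal with `Cᵢᵢ` depending only on `Dᵢᵢ`, which defines `h` on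
the spectrum of `A`.
-/

open scoped MatrixOrder

def IsExactInterpolation {R : Type*} [Mul R] [One R] [Star R] [LE R] (a b : R) : Prop :=
  ∀ t : R, star t * t ≤ 1 → star t * a * t ≤ a → star t * b * t ≤ b

theorem IsSelfAdjoint.conjugate_eq_of_conjugate_le {R : Type*} [Semiring R] [StarRing R]
    [PartialOrder R] [StarOrderedRing R] {t b : R} (ht : IsSelfAdjoint t) (htt : t * t = 1)
    (h : t * b * t ≤ b) : t * b * t = b := by
  refine le_antisymm h ?_
  calc b = t * t * b * (t * t) := by rw [htt, one_mul, mul_one]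
    _ = t * (t * b * t) * t := by simp only [mul_assoc]
    _ ≤ t * b * t := ht.conjugate_le_conjugate h

namespace IsStarProjection

variable {R : Type*} [Ring R] [StarRing R] {p : R}

theorem two_nsmul_sub_one_mul_self (hp : IsStarProjection p) :
    (2 • p - 1) * (2 • p - 1) = 1 := by
  have hpp : p * p = p := hp.isIdempotentElem.eq
  calc (2 • p - 1) * (2 • p - 1) = 4 • (p * p) - 4 • p + 1 := by noncomm_ring
    _ = 1 := by rw [hpp, sub_self, zero_add]

theorem isSelfAdjoint_two_nsmul_sub_one (hp : IsStarProjection p) :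
    IsSelfAdjoint (2 • p - 1) := by
  simp only [IsSelfAdjoint, star_sub, star_nsmul, star_one, hp.isSelfAdjoint.star_eq]

end IsStarProjection

theorem Commute.of_two_nsmul_sub_one_left {R : Type*} [Ring R] [IsAddTorsionFree R] {p b : R}
    (h : Commute (2 • p - 1) b) : Commute p b := by
  have h2 : 2 • (p * b) = 2 • (b * p) := by
    simpa only [Commute, SemiconjBy, sub_mul, mul_sub, smul_mul_assoc, mul_smul_comm, one_mul,
      mul_one, sub_left_inj] using h
  exact IsAddTorsionFree.nsmul_right_injective two_ne_zero h2

theorem IsExactInterpolation.commute {R : Type*} [Ring R] [StarRing R] [PartialOrder R]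
    [StarOrderedRing R] [IsAddTorsionFree R] {a b p : R} (hab : IsExactInterpolation a b)
    (hp : IsStarProjection p) (hap : Commute a p) : Commute b p := by
  set t := 2 • p - 1
  have ht : IsSelfAdjoint t := hp.isSelfAdjoint_two_nsmul_sub_one
  have htt : t * t = 1 := hp.two_nsmul_sub_one_mul_self
  have hta : Commute t a := (hap.symm.smul_left 2).sub_left (.one_left a)
  have htbt : t * b * t = b := by
    refine ht.conjugate_eq_of_conjugate_le htt ?_
    simpa only [ht.star_eq] using hab t (by rw [ht.star_eq, htt])
      (by rw [ht.star_eq, hta.eq, mul_assoc, htt, mul_one])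
  have htb : Commute t b := by
    calc t * b = t * b * t * t := by rw [mul_assoc _ t t, htt, mul_one]
      _ = b * t := by rw [htbt]
  exact htb.of_two_nsmul_sub_one_left.symm

namespace Matrix

instance instIsAddTorsionFree {m n α : Type*} [AddMonoid α] [IsAddTorsionFree α] :
    IsAddTorsionFree (Matrix m n α) :=
  inferInstanceAs (IsAddTorsionFree (m → n → α))

theorem commute_diagonal_vecMulVec {n α : Type*} [Fintype n] [DecidableEq n] [CommSemiring α]
    {d v w : n → α} (h : ∀ k l, v k ≠ 0 → w l ≠ 0 → d k = d l) :
    Commute (diagonal d) (vecMulVec v w) := by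
  show diagonal d * vecMulVec v w = vecMulVec v w * diagonal d
  ext k l
  simp only [diagonal_mul, mul_diagonal, vecMulVec_apply]
  by_cases hk : v k = 0
  · simp [hk]
  by_cases hl : w l = 0
  · simp [hl]
  rw [h k l hk hl, mul_comm]

variable {n 𝕜 : Type*} [Fintype n] [DecidableEq n] [RCLike 𝕜] {C : Matrix n n 𝕜} {d : n → 𝕜}

theorem isStarProjection_inv_smul_vecMulVec {v : n → 𝕜} (hv : v ≠ 0) :
    IsStarProjection ((star v ⬝ᵥ v)⁻¹ • vecMulVec v (star v)) := by
  have hr : star v ⬝ᵥ v ≠ 0 := dotProduct_star_self_eq_zero.not.mpr hv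
  constructor
  · show _ * _ = _
    rw [smul_mul_smul_comm, vecMulVec_mul_vecMulVec, vecMulVec_smul, smul_smul,
      inv_mul_cancel_right₀ hr]
  · show star _ = _
    rw [star_smul, star_inv₀, ← star_dotProduct, star_eq_conjTranspose, conjTranspose_vecMulVec,
      star_star]

theorem exists_mulVec_eq_smul_of_forall_commute
    (hC : ∀ q : Matrix n n 𝕜, IsStarProjection q → Commute (diagonal d) q → Commute C q)
    {v : n → 𝕜} (hv0 : v ≠ 0) (hv : ∀ k l, v k ≠ 0 → v l ≠ 0 → d k = d l) :
    ∃ μ : 𝕜, C *ᵥ v = μ • v := by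
  set r := star v ⬝ᵥ v
  set Q := r⁻¹ • vecMulVec v (star v)
  have hQ : ∀ w, Q *ᵥ w = (r⁻¹ * (star v ⬝ᵥ w)) • v := fun w => by
    rw [smul_mulVec, vecMulVec_mulVec, op_smul_eq_smul, smul_smul]
  have hQv : Q *ᵥ v = v := by
    rw [hQ, inv_mul_cancel₀ (dotProduct_star_self_eq_zero.not.mpr hv0), one_smul]
  have hCQ : Commute C Q := hC Q (isStarProjection_inv_smul_vecMulVec hv0)
    ((commute_diagonal_vecMulVec fun k l hk hl => hv k l hk (by simpa using hl)).smul_right _)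
  refine ⟨r⁻¹ * (star v ⬝ᵥ C *ᵥ v), ?_⟩
  rw [← hQ, mulVec_mulVec, ← hCQ.eq, ← mulVec_mulVec, hQv]

theorem eq_diagonal_diag_of_forall_commute
    (hC : ∀ q : Matrix n n 𝕜, IsStarProjection q → Commute (diagonal d) q → Commute C q) :
    C = diagonal C.diag := by
  ext i j
  rcases eq_or_ne i j with rfl | hij
  · simp
  obtain ⟨μ, hμ⟩ := exists_mulVec_eq_smul_of_forall_commute hC (v := Pi.single j 1)
    (by simp) fun k l hk hl => by
      rw [Pi.single_apply] at hk hl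
      simp_all
  simpa [mulVec_single_one, hij] using congrFun hμ i

theorem factorsThrough_diag_of_forall_commute
    (hC : ∀ q : Matrix n n 𝕜, IsStarProjection q → Commute (diagonal d) q → Commute C q) :
    C.diag.FactorsThrough d := by
  intro i j hij
  rcases eq_or_ne i j with rfl | hne
  · rfl
  have hd : ∀ k, (Pi.single i 1 + Pi.single j 1 : n → 𝕜) k ≠ 0 → d k = d i := fun k hk => by
    rcases eq_or_ne k i with rfl | hki
    · rfl
    rcases eq_or_ne k j with rfl | hkj
    · exact hij.symm
    simp [hki, hkj] at hk
  obtain ⟨μ, hμ⟩ := exists_mulVec_eq_smul_of_forall_commute hC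
    (v := Pi.single i 1 + Pi.single j 1) (fun h => by simpa [hne] using congrFun h i)
    fun k l hk hl => (hd k hk).trans (hd l hl).symm
  rw [eq_diagonal_diag_of_forall_commute hC, mulVec_add, diagonal_mulVec_single,
    diagonal_mulVec_single] at hμ
  have hi : C i i = μ := by simpa [hne] using congrFun hμ i
  have hj : C j j = μ := by simpa [hne.symm] using congrFun hμ j
  exact hi.trans hj.symm

end Matrix

theorem StarAlgEquiv.forall_commute_symm {S A B : Type*} [Add A] [Add B] [Mul A] [Mul B]
    [SMul S A] [SMul S B] [Star A] [Star B] (φ : A ≃⋆ₐ[S] B) {a b : B}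
    (h : ∀ p, IsStarProjection p → Commute a p → Commute b p) :
    ∀ q, IsStarProjection q → Commute (φ.symm a) q → Commute (φ.symm b) q := fun q hq haq => by
  simpa using (h (φ q) (hq.map φ) (by simpa using haq.map φ)).map φ.symm

theorem Matrix.IsHermitian.matFunCalc_eq {n : ℕ} {A : Matrix (Fin n) (Fin n) ℂ}
    (hA : A.IsHermitian) (h : ℝ → ℝ) :
    matFunCalc h A = Unitary.conjStarAlgAut ℂ _ hA.eigenvectorUnitary
      (diagonal fun i => (h (hA.eigenvalues i) : ℂ)) := by
  rw [matFunCalc, dif_pos hA]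
  rfl

/-- Donoghue's lemma, matrix case: if `B` is an exact interpolation
matrix for `A`, then `B` commutes with every orthogonal projection commuting with
`A`, and `B = h(A)` for some positive function `h`. -/
theorem donoghue_lemma (n : ℕ) (A B : Matrix (Fin n) (Fin n) ℂ)
    (hA : A.PosDef) (hB : B.PosDef)
    (hexact : ∀ T : Matrix (Fin n) (Fin n) ℂ,
      LoewnerLE (Tᴴ * T) 1 → LoewnerLE (Tᴴ * A * T) A → LoewnerLE (Tᴴ * B * T) B) :
    (∀ P : Matrix (Fin n) (Fin n) ℂ,
        P * P = P → Pᴴ = P → A * P = P * A → B * P = P * B) ∧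
    ∃ h : ℝ → ℝ, (∀ x : ℝ, 0 < x → 0 < h x) ∧ B = matFunCalc h A := by
  have hcomm (P : Matrix (Fin n) (Fin n) ℂ) (hP : IsStarProjection P) (hAP : Commute A P) :
      Commute B P :=
    -- `hexact` is `IsExactInterpolation A B` once `LoewnerLE` is read as the `MatrixOrder` `≤`
    IsExactInterpolation.commute hexact hP hAP
  refine ⟨fun P hP2 hPH => hcomm P ⟨hP2, hPH⟩, ?_⟩
  set U := hA.1.eigenvectorUnitary
  set φ := Unitary.conjStarAlgAut ℂ _ U
  set d := hA.1.eigenvalues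
  set C := φ.symm B
  have hC := φ.forall_commute_symm hcomm
  rw [hA.1.spectral_theorem, StarAlgEquiv.symm_apply_apply] at hC
  have hCpos : C.PosDef :=
    (Matrix.IsUnit.posDef_star_left_conjugate_iff Unitary.isUnit_coe).mpr hB
  have hfac : (fun i => (C i i).re).FactorsThrough d := fun i j hij =>
    congrArg Complex.re (factorsThrough_diag_of_forall_commute hC (congrArg RCLike.ofReal hij))
  refine ⟨Function.extend d (fun i => (C i i).re) 1, fun x _ => ?_, ?_⟩
  · rw [Function.extend_def]
    split_ifs
    exacts [(Complex.pos_iff.mp hCpos.diag_pos).1, one_pos]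
  · rw [hA.1.matFunCalc_eq, ← φ.apply_symm_apply B]
    refine congrArg φ ((eq_diagonal_diag_of_forall_commute hC).trans
      (congrArg diagonal (funext fun i => ?_)))
    rw [hfac.extend_apply]
    exact Complex.eq_re_of_ofReal_le (by rw [Complex.ofReal_zero]; exact hCpos.diag_pos.le)
end

section
/- Let 𝐇 : (0,∞) → (0,∞) be increasing and continuous with 𝐇(1) = 1 and 𝐇(t) ≤ max{1, t} for all t. Let A, B ∈ Mₙ(ℂ) be positive definite Hermitian matrices such that for all M₀, M₁ > 0 and all T ∈ Mₙ(ℂ), the conditions TᴴT ≤ M₀·I and TᴴAT ≤ M₁·A imply TᴴBT ≤ M₀·𝐇(M₁/M₀)·B. Then there exists a function h : (0,∞) → (0,∞) such that B = h(A) and h(λ) ≤ 𝐇(λ/μ)·h(μ) for all eigenvalues λ, μ of A. -/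
/-!
Conjugating by the eigenvector unitary `U` of `A` turns `A` into `diagonal λ` and `B` into
`C = Uᴴ B U`; star-algebra automorphisms preserve the Loewner order, so the type-`𝐇` condition
passes to the pair `(diagonal λ, C)`. For a diagonal sign matrix `S` (with `M₀ = M₁ = 1` and
`𝐇(1) = 1`) it gives `S C S ≤ C` and, conjugating back, equality; so the entries of `C` off the
diagonal vanish. For the matrix unit `T = eᵢⱼ` (with `M₀ = 1`, `M₁ = λᵢ/λⱼ`) the `(j, j)` entry of
the conclusion reads `cᵢ ≤ 𝐇(λᵢ/λⱼ) cⱼ` for the diagonal `c` of `C`. In particular `c` only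
depends on `λ`, hence `c = h ∘ λ` for some positive `h`, and `B = U (diagonal c) Uᴴ = h(A)`.
-/

open Matrix MeasureTheory
open scoped ComplexOrder

open scoped MatrixOrder

lemma Matrix.diagonal_le_diagonal_iff {ι 𝕜 : Type*} [DecidableEq ι] [RCLike 𝕜] {d e : ι → 𝕜} :
    diagonal d ≤ diagonal e ↔ d ≤ e := by
  rw [le_iff, diagonal_sub, posSemidef_diagonal_iff, Pi.le_def]
  simp only [sub_nonneg]

lemma Function.exists_pos_comp_eq_of_factorsThrough {ι α : Type*} {f : ι → α} {c : ι → ℝ}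
    (hc : ∀ i, 0 < c i) (hcf : c.FactorsThrough f) :
    ∃ h : α → ℝ, (∀ x, 0 < h x) ∧ ∀ i, h (f i) = c i := by
  classical
  refine ⟨extend f c 1, fun x => ?_, hcf.extend_apply 1⟩
  rw [extend_def]
  split_ifs
  exacts [hc _, one_pos]

section TypeH

variable {ι : Type*} [Fintype ι] [DecidableEq ι]

-- The paper's type-𝐇 condition; under `MatrixOrder`, `X ≤ Y` unfolds to `LoewnerLE X Y`.
def IsOfTypeH (H : ℝ → ℝ) (A B : Matrix ι ι ℂ) : Prop :=
  ∀ M₀ M₁ : ℝ, 0 < M₀ → 0 < M₁ → ∀ T : Matrix ι ι ℂ,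
    Tᴴ * T ≤ M₀ • 1 → Tᴴ * A * T ≤ M₁ • A → Tᴴ * B * T ≤ (M₀ * H (M₁ / M₀)) • B

namespace IsOfTypeH

variable {H : ℝ → ℝ} {A B : Matrix ι ι ℂ}

lemma map_starAlgEquiv (hAB : IsOfTypeH H A B) (φ : Matrix ι ι ℂ ≃⋆ₐ[ℂ] Matrix ι ι ℂ) :
    IsOfTypeH H (φ A) (φ B) := by
  intro M₀ M₁ h₀ h₁ S hS hSA
  have hconj (X : Matrix ι ι ℂ) : Sᴴ * φ X * S = φ ((φ.symm S)ᴴ * X * φ.symm S) := by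
    simp only [← star_eq_conjTranspose, map_mul, map_star, StarAlgEquiv.apply_symm_apply]
  have hsmul (r : ℝ) (X : Matrix ι ι ℂ) : r • φ X = φ (r • X) := by
    simp only [RCLike.real_smul_eq_coe_smul (K := ℂ), map_smul]
  replace hS : Sᴴ * φ 1 * S ≤ M₀ • φ 1 := by simpa only [map_one, mul_one] using hS
  rw [hconj, hsmul, map_le_map_iff] at hS hSA
  rw [hconj, hsmul, map_le_map_iff]
  exact hAB M₀ M₁ h₀ h₁ _ (by simpa only [mul_one] using hS) hSA

lemma conj_le_self (hH : H 1 = 1) (hAB : IsOfTypeH H A B) {T : Matrix ι ι ℂ}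
    (hT : star T * T ≤ 1) (hTA : star T * A * T ≤ A) : star T * B * T ≤ B := by
  have h := hAB 1 1 one_pos one_pos T (by rwa [one_smul]) (by rwa [one_smul])
  rwa [div_one, hH, one_mul, one_smul] at h

lemma conjStarAlgAut_le_self (hH : H 1 = 1) (hAB : IsOfTypeH H A B)
    (u : unitary (Matrix ι ι ℂ)) (hA : Unitary.conjStarAlgAut ℂ _ u A = A) :
    Unitary.conjStarAlgAut ℂ _ u B ≤ B := by
  simpa using hAB.conj_le_self hH (T := (star u : Matrix ι ι ℂ)) (by simp) (by simpa using hA.le)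

lemma conjStarAlgAut_eq_self (hH : H 1 = 1) (hAB : IsOfTypeH H A B)
    (u : unitary (Matrix ι ι ℂ)) (hA : Unitary.conjStarAlgAut ℂ _ u A = A) :
    Unitary.conjStarAlgAut ℂ _ u B = B := by
  set φ := Unitary.conjStarAlgAut ℂ (Matrix ι ι ℂ) u
  have hA' : Unitary.conjStarAlgAut ℂ _ (star u) A = A := by
    rw [← Unitary.conjStarAlgAut_symm, φ.symm_apply_eq, hA]
  refine le_antisymm (hAB.conjStarAlgAut_le_self hH u hA) ?_
  have := (map_le_map_iff φ).mpr (hAB.conjStarAlgAut_le_self hH (star u) hA')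
  rwa [← Unitary.conjStarAlgAut_symm, StarAlgEquiv.apply_symm_apply] at this

lemma isDiag (hH : H 1 = 1) {d : ι → ℂ} (hB : IsOfTypeH H (diagonal d) B) : B.IsDiag := by
  intro p q hpq
  let s : ι → ℂ := fun k => if k = p then -1 else 1
  have hs : diagonal s ∈ unitary (Matrix ι ι ℂ) := by
    rw [← Matrix.unitaryGroup, Matrix.mem_unitaryGroup_iff, star_eq_conjTranspose,
      diagonal_conjTranspose, diagonal_mul_diagonal, ← diagonal_one]
    congr 1
    ext k
    by_cases hk : k = p <;> simp [s, hk]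
  have hcomm : Unitary.conjStarAlgAut ℂ _ ⟨diagonal s, hs⟩ (diagonal d) = diagonal d := by
    rw [Unitary.conjStarAlgAut_apply, star_eq_conjTranspose, diagonal_conjTranspose,
      diagonal_mul_diagonal, diagonal_mul_diagonal]
    congr 1
    ext k
    by_cases hk : k = p <;> simp [s, hk]
  have hflip : -B p q = B p q := by
    simpa [s, star_eq_conjTranspose, Ne.symm hpq] using
      congrFun₂ (hB.conjStarAlgAut_eq_self hH ⟨diagonal s, hs⟩ hcomm) p q
  exact self_eq_neg.mp hflip.symm

lemma re_diag_le {d : ι → ℝ} (hd : ∀ k, 0 < d k)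
    (hB : IsOfTypeH H (diagonal fun k => (d k : ℂ)) B) (i j : ι) :
    (B i i).re ≤ H (d i / d j) * (B j j).re := by
  let T : Matrix ι ι ℂ := single i j 1
  have hT : Tᴴ * T ≤ (1 : ℝ) • 1 := by
    rw [one_smul, conjTranspose_single, star_one, single_mul_single_same, one_mul,
      ← diagonal_single, ← diagonal_one, diagonal_le_diagonal_iff]
    intro k
    by_cases hk : k = j <;> simp [hk]
  have hTA :
      Tᴴ * diagonal (fun k => (d k : ℂ)) * T ≤ (d i / d j) • diagonal fun k => (d k : ℂ) := by
    rw [conjTranspose_single, star_one, single_mul_mul_single, diagonal_apply_eq, one_mul,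
      mul_one, ← diagonal_single, ← diagonal_smul, diagonal_le_diagonal_iff]
    intro k
    rw [Pi.smul_apply, Complex.real_smul, ← Complex.ofReal_mul]
    by_cases hk : k = j
    · rw [hk, Pi.single_eq_same, div_mul_cancel₀ _ (hd j).ne']
    · rw [Pi.single_eq_of_ne hk, Complex.zero_le_real]
      exact mul_nonneg (div_pos (hd i) (hd j)).le (hd k).le
  have hle := hB 1 (d i / d j) one_pos (div_pos (hd i) (hd j)) T hT hTA
  have hjj : B i i ≤ H (d i / d j) * B j j := by
    simpa [T] using (le_iff.mp hle).diag_nonneg (i := j)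
  simpa using (Complex.le_def.mp hjj).1

lemma exists_eq_diagonal_comp (hH : H 1 = 1) {d : ι → ℝ} (hd : ∀ k, 0 < d k)
    (hBpos : B.PosDef) (hB : IsOfTypeH H (diagonal fun k => (d k : ℂ)) B) :
    ∃ h : ℝ → ℝ, (∀ x, 0 < h x) ∧ B = diagonal (fun k => (h (d k) : ℂ)) ∧
      ∀ i j, h (d i) ≤ H (d i / d j) * h (d j) := by
  have hB_le := hB.re_diag_le hd
  have hBd : (fun k => (B k k).re).FactorsThrough d := fun i j hij =>
    le_antisymm (by simpa [hij, hH, (hd j).ne'] using hB_le i j)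
      (by simpa [hij, hH, (hd j).ne'] using hB_le j i)
  obtain ⟨h, hpos, hh⟩ := Function.exists_pos_comp_eq_of_factorsThrough
    (fun k => (Complex.pos_iff.mp hBpos.diag_pos).1) hBd
  refine ⟨h, hpos, ?_, fun i j => hh i ▸ hh j ▸ hB_le i j⟩
  rw [← (hB.isDiag hH).diagonal_diag]
  congr 1
  ext k
  rw [diag_apply, hh]
  exact Complex.eq_re_of_ofReal_le (r := 0) (by simpa using hBpos.diag_pos.le)

end IsOfTypeH

end TypeH

theorem type_H_representation_general (n : ℕ) (H : ℝ → ℝ)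
    (Hone : H 1 = 1)
    (A B : Matrix (Fin n) (Fin n) ℂ) (hA : A.PosDef) (hB : B.PosDef)
    (htype : ∀ M₀ M₁ : ℝ, 0 < M₀ → 0 < M₁ → ∀ T : Matrix (Fin n) (Fin n) ℂ,
      LoewnerLE (Tᴴ * T) (M₀ • (1 : Matrix (Fin n) (Fin n) ℂ)) →
      LoewnerLE (Tᴴ * A * T) (M₁ • A) →
      LoewnerLE (Tᴴ * B * T) ((M₀ * H (M₁ / M₀)) • B)) :
    ∃ h : ℝ → ℝ, (∀ x : ℝ, 0 < x → 0 < h x) ∧ B = matFunCalc h A ∧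
      ∀ i j : Fin n, h (hA.isHermitian.eigenvalues i) ≤
        H (hA.isHermitian.eigenvalues i / hA.isHermitian.eigenvalues j) *
          h (hA.isHermitian.eigenvalues j) := by
  set U := hA.isHermitian.eigenvectorUnitary
  have hC : IsOfTypeH H (diagonal fun k => (hA.isHermitian.eigenvalues k : ℂ))
      (Unitary.conjStarAlgAut ℂ _ (star U) B) := by
    have := IsOfTypeH.map_starAlgEquiv htype (Unitary.conjStarAlgAut ℂ _ (star U))
    rwa [hA.isHermitian.conjStarAlgAut_star_eigenvectorUnitary] at this
  obtain ⟨h, hpos, hCeq, hle⟩ := hC.exists_eq_diagonal_comp Hone hA.eigenvalues_pos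
    ((Unitary.isUnit_coe (U := star U)).posDef_star_right_conjugate_iff.mpr hB)
  refine ⟨h, fun x _ => hpos x, ?_, hle⟩
  calc B = Unitary.conjStarAlgAut ℂ _ U (Unitary.conjStarAlgAut ℂ _ (star U) B) := by
        rw [← Unitary.conjStarAlgAut_symm, StarAlgEquiv.apply_symm_apply]
    _ = matFunCalc h A := by
        rw [matFunCalc, dif_pos hA.isHermitian, ← hCeq]
        rfl

/-- Theorem 3.1, matrix case: if the quadratic space determined by
`B` is of type `𝐇` relative to the couple determined by `A`, then `B = h(A)` for
a positive function `h` satisfying `h(λ) ≤ 𝐇(λ/μ)·h(μ)` on the spectrum of `A`. -/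
theorem type_H_representation (n : ℕ) (H : ℝ → ℝ)
    (Hmono : ∀ s t : ℝ, 0 < s → s ≤ t → H s ≤ H t)
    (Hcont : ContinuousOn H (Set.Ioi (0 : ℝ)))
    (Hpos : ∀ t : ℝ, 0 < t → 0 < H t)
    (Hone : H 1 = 1) (Hbound : ∀ t : ℝ, 0 < t → H t ≤ max 1 t)
    (A B : Matrix (Fin n) (Fin n) ℂ) (hA : A.PosDef) (hB : B.PosDef)
    (htype : ∀ M₀ M₁ : ℝ, 0 < M₀ → 0 < M₁ → ∀ T : Matrix (Fin n) (Fin n) ℂ,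
      LoewnerLE (Tᴴ * T) (M₀ • (1 : Matrix (Fin n) (Fin n) ℂ)) →
      LoewnerLE (Tᴴ * A * T) (M₁ • A) →
      LoewnerLE (Tᴴ * B * T) ((M₀ * H (M₁ / M₀)) • B)) :
    ∃ h : ℝ → ℝ, (∀ x : ℝ, 0 < x → 0 < h x) ∧ B = matFunCalc h A ∧
      ∀ i j : Fin n, h (hA.isHermitian.eigenvalues i) ≤
        H (hA.isHermitian.eigenvalues i / hA.isHermitian.eigenvalues j) *
          h (hA.isHermitian.eigenvalues j) :=
  type_H_representation_general n H Hone A B hA hB htype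
end

section
/- Let n be a positive integer and let h : (0,∞) → (0,∞) be such that for every positive definite Hermitian A ∈ M_{2n}(ℂ) and every T ∈ M_{2n}(ℂ), the conditions TᴴT ≤ I and TᴴAT ≤ A imply Tᴴh(A)T ≤ h(A). Then h is matrix monotone of order n: for all positive definite Hermitian A₁, A₂ ∈ Mₙ(ℂ) with A₁ ≤ A₂ one has h(A₁) ≤ h(A₂). -/
open Matrix MeasureTheory
open scoped ComplexOrder

/-!
Take `A = diag(A₂, A₁)` of order `2n` and the shift `T = [[0, 0], [1, 0]]`. Then
`TᴴT = diag(1, 0) ≤ 1` and `TᴴAT = diag(A₁, 0) ≤ A`, so the interpolation property gives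
`diag(h(A₁), 0) = Tᴴh(A)T ≤ h(A) = diag(h(A₂), h(A₁))`, and comparing upper-left blocks yields
`h(A₁) ≤ h(A₂)`. The identity `h(diag(A₂, A₁)) = diag(h(A₂), h(A₁))` holds because the
functional calculus of a Hermitian matrix only sees `h` on its finite spectrum, so `h` may be
replaced by a polynomial interpolating it on the spectra of `A₁`, `A₂` and `A`.
-/

open Polynomial
open scoped MatrixOrder

lemma Polynomial.exists_eqOn_eval {K : Type*} [Field K] (f : K → K) {s : Set K} (hs : s.Finite) :
    ∃ p : K[X], s.EqOn f p.eval := by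
  classical
  exact ⟨Lagrange.interpolate hs.toFinset id f, fun _ hx =>
    (Lagrange.eval_interpolate_at_node f (Set.injOn_id _) (hs.mem_toFinset.2 hx)).symm⟩

namespace Matrix

section Semiring

variable {m n α : Type*} [Fintype m] [Fintype n] [DecidableEq m] [DecidableEq n] [Semiring α]

lemma aeval_fromBlocks_zero_zero {R : Type*} [CommSemiring R] [Algebra R α] (p : R[X])
    (A : Matrix m m α) (D : Matrix n n α) :
    aeval (fromBlocks A 0 0 D) p = fromBlocks (aeval A p) 0 0 (aeval D p) := by
  induction p using Polynomial.induction_on' with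
  | add p q hp hq => simp only [map_add, hp, hq, fromBlocks_add, add_zero]
  | monomial k r =>
    simp only [aeval_monomial, ← Algebra.smul_def, fromBlocks_diagonal_pow, fromBlocks_smul,
      smul_zero]

lemma conjTranspose_mul_fromBlocks_mul [StarRing α] (A B C D : Matrix n n α) :
    (fromBlocks 0 0 1 0)ᴴ * fromBlocks A B C D * fromBlocks 0 0 1 0 = fromBlocks D 0 0 0 := by
  simp [fromBlocks_conjTranspose, fromBlocks_multiply]

end Semiring

variable {𝕜 : Type*} [RCLike 𝕜] {m n : Type*} [Fintype m] [Fintype n]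

lemma reindex_conjTranspose_mul_mul_le_iff (e : m ≃ n) (T A B : Matrix m m 𝕜) :
    (reindex e e T)ᴴ * reindex e e A * reindex e e T ≤ reindex e e B ↔ Tᴴ * A * T ≤ B := by
  simp only [le_iff, reindex_apply, conjTranspose_submatrix, submatrix_mul_equiv]
  exact posSemidef_submatrix_equiv (M := B - Tᴴ * A * T) e.symm

variable [DecidableEq m] [DecidableEq n]

lemma posSemidef_fromBlocks_zero_zero_iff {A : Matrix m m 𝕜} {D : Matrix n n 𝕜} :
    (fromBlocks A 0 0 D).PosSemidef ↔ A.PosSemidef ∧ D.PosSemidef := by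
  refine ⟨fun h => ⟨h.submatrix Sum.inl, h.submatrix Sum.inr⟩, fun ⟨hA, hD⟩ => ?_⟩
  have hA' := hA.conjTranspose_mul_mul_same (fromCols (1 : Matrix m m 𝕜) (0 : Matrix m n 𝕜))
  have hD' := hD.conjTranspose_mul_mul_same (fromCols (0 : Matrix n m 𝕜) (1 : Matrix n n 𝕜))
  convert hA'.add hD' using 1
  ext (i | i) (j | j) <;>
    simp [conjTranspose_fromCols_eq_fromRows_conjTranspose, fromRows_mul, mul_fromCols]

lemma fromBlocks_zero_zero_le_iff {A A' : Matrix m m 𝕜} {D D' : Matrix n n 𝕜} :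
    fromBlocks A 0 0 D ≤ fromBlocks A' 0 0 D' ↔ A ≤ A' ∧ D ≤ D' := by
  simp only [le_iff, sub_eq_add_neg, fromBlocks_neg, fromBlocks_add, neg_zero, add_zero]
  exact posSemidef_fromBlocks_zero_zero_iff

lemma PosDef.fromBlocks_zero_zero {A : Matrix m m 𝕜} {D : Matrix n n 𝕜} (hA : A.PosDef)
    (hD : D.PosDef) : (fromBlocks A 0 0 D).PosDef :=
  (posSemidef_fromBlocks_zero_zero_iff.2 ⟨hA.posSemidef, hD.posSemidef⟩).posDef_iff_isUnit.2
    (isUnit_fromBlocks_zero₂₁.2 ⟨hA.isUnit, hD.isUnit⟩)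

lemma IsHermitian.cfc_eq_aeval {A : Matrix n n 𝕜} (hA : A.IsHermitian) {f : ℝ → ℝ} {p : ℝ[X]}
    (hp : (spectrum ℝ A).EqOn f p.eval) : cfc f A = aeval A p := by
  rw [cfc_congr hp, cfc_polynomial p A hA.isSelfAdjoint]

lemma cfc_fromBlocks_zero_zero {A : Matrix m m 𝕜} {D : Matrix n n 𝕜} (hA : A.IsHermitian)
    (hD : D.IsHermitian) (f : ℝ → ℝ) :
    cfc f (fromBlocks A 0 0 D) = fromBlocks (cfc f A) 0 0 (cfc f D) := by
  have hAD : (fromBlocks A 0 0 D).IsHermitian := hA.fromBlocks (by simp) hD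
  obtain ⟨p, hp⟩ := exists_eqOn_eval f
    ((A.finite_real_spectrum.union D.finite_real_spectrum).union
      (fromBlocks A 0 0 D).finite_real_spectrum)
  rw [hA.cfc_eq_aeval (hp.mono fun _ hx => .inl (.inl hx)),
    hD.cfc_eq_aeval (hp.mono fun _ hx => .inl (.inr hx)),
    hAD.cfc_eq_aeval (hp.mono fun _ hx => .inr hx), aeval_fromBlocks_zero_zero]

variable (𝕜) in
def reindexStarAlgEquiv (e : m ≃ n) : Matrix m m 𝕜 ≃⋆ₐ[ℝ] Matrix n n 𝕜 :=
  .ofAlgEquiv (reindexAlgEquiv ℝ 𝕜 e) fun A => (conjTranspose_reindex e e A).symm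

lemma cfc_reindex (e : m ≃ n) {A : Matrix m m 𝕜} (hA : A.IsHermitian) (f : ℝ → ℝ) :
    cfc f (reindex e e A) = reindex e e (cfc f A) :=
  (StarAlgHomClass.map_cfc (reindexStarAlgEquiv 𝕜 e) f A (A.finite_real_spectrum.continuousOn f)
    (continuous_id.matrix_reindex e e) hA.isSelfAdjoint (hA.submatrix e.symm).isSelfAdjoint).symm

end Matrix

variable {𝕜 : Type*} [RCLike 𝕜] {ι κ : Type*} [Fintype ι] [DecidableEq ι] [Fintype κ]
  [DecidableEq κ]

variable (𝕜 ι) in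
/-- The class `C_ι` of (exact) interpolation functions for matrices indexed by `ι`. -/
def IsInterpolationFunction (h : ℝ → ℝ) : Prop :=
  ∀ A : Matrix ι ι 𝕜, A.PosDef → ∀ T : Matrix ι ι 𝕜,
    Tᴴ * T ≤ 1 → Tᴴ * A * T ≤ A → Tᴴ * cfc h A * T ≤ cfc h A

lemma IsInterpolationFunction.reindex {h : ℝ → ℝ} (H : IsInterpolationFunction 𝕜 ι h)
    (e : ι ≃ κ) : IsInterpolationFunction 𝕜 κ h := by
  intro A hA T hT hTA
  obtain ⟨A, rfl⟩ := (Matrix.reindex e e).surjective A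
  obtain ⟨T, rfl⟩ := (Matrix.reindex e e).surjective T
  have hA' : A.PosDef := by
    simpa only [reindex_apply, submatrix_submatrix, Equiv.symm_comp_self, submatrix_id_id]
      using hA.submatrix e.injective
  have hT' : Tᴴ * T ≤ 1 := by
    simpa using (reindex_conjTranspose_mul_mul_le_iff e T 1 1).1 (by simpa using hT)
  rw [reindex_conjTranspose_mul_mul_le_iff] at hTA
  rw [cfc_reindex e hA'.isHermitian, reindex_conjTranspose_mul_mul_le_iff]
  exact H A hA' T hT' hTA

lemma IsInterpolationFunction.cfc_le_cfc {h : ℝ → ℝ} (H : IsInterpolationFunction 𝕜 (ι ⊕ ι) h)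
    {A₁ A₂ : Matrix ι ι 𝕜} (hA₁ : A₁.PosDef) (hA₂ : A₂.PosDef) (hA₁₂ : A₁ ≤ A₂) :
    cfc h A₁ ≤ cfc h A₂ := by
  set T : Matrix (ι ⊕ ι) (ι ⊕ ι) 𝕜 := fromBlocks 0 0 1 0
  have hT : Tᴴ * T ≤ 1 := by
    rw [← mul_one Tᴴ, ← fromBlocks_one, conjTranspose_mul_fromBlocks_mul,
      fromBlocks_zero_zero_le_iff]
    exact ⟨le_rfl, PosSemidef.one.nonneg⟩
  have hTA : Tᴴ * fromBlocks A₂ 0 0 A₁ * T ≤ fromBlocks A₂ 0 0 A₁ := by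
    rw [conjTranspose_mul_fromBlocks_mul, fromBlocks_zero_zero_le_iff]
    exact ⟨hA₁₂, hA₁.posSemidef.nonneg⟩
  have key := H _ (hA₂.fromBlocks_zero_zero hA₁) T hT hTA
  rw [cfc_fromBlocks_zero_zero hA₂.isHermitian hA₁.isHermitian, conjTranspose_mul_fromBlocks_mul,
    fromBlocks_zero_zero_le_iff] at key
  exact key.1

lemma matFunCalc_eq_cfc {k : ℕ} (h : ℝ → ℝ) {A : Matrix (Fin k) (Fin k) ℂ} (hA : A.IsHermitian) :
    matFunCalc h A = cfc h A := by
  rw [matFunCalc, dif_pos hA, hA.cfc_eq, IsHermitian.cfc, Unitary.conjStarAlgAut_apply]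
  rfl

theorem interpolation_implies_monotone_general (n : ℕ)
    (h : ℝ → ℝ)
    (hyp : ∀ A : Matrix (Fin (2 * n)) (Fin (2 * n)) ℂ, A.PosDef →
      ∀ T : Matrix (Fin (2 * n)) (Fin (2 * n)) ℂ,
        LoewnerLE (Tᴴ * T) 1 → LoewnerLE (Tᴴ * A * T) A →
        LoewnerLE (Tᴴ * matFunCalc h A * T) (matFunCalc h A)) :
    ∀ A₁ A₂ : Matrix (Fin n) (Fin n) ℂ, A₁.PosDef → A₂.PosDef →
      LoewnerLE A₁ A₂ → LoewnerLE (matFunCalc h A₁) (matFunCalc h A₂) := by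
  have H : IsInterpolationFunction ℂ (Fin (2 * n)) h := fun A hA T hT hTA => by
    have := hyp A hA T hT hTA
    rwa [matFunCalc_eq_cfc h hA.isHermitian] at this
  intro A₁ A₂ hA₁ hA₂ hA₁₂
  rw [LoewnerLE, matFunCalc_eq_cfc h hA₁.isHermitian, matFunCalc_eq_cfc h hA₂.isHermitian]
  exact (H.reindex ((finCongr (two_mul n)).trans finSumFinEquiv.symm)).cfc_le_cfc hA₁ hA₂ hA₁₂

/-- inclusion `C_{2n} ⊆ P'_n`: if `h` is an exact interpolation
function for all positive definite matrices of order `2n`, then `h` is matrix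
monotone of order `n`. -/
theorem interpolation_implies_monotone (n : ℕ) (hn : 0 < n)
    (h : ℝ → ℝ) (hpos : ∀ x : ℝ, 0 < x → 0 < h x)
    (hyp : ∀ A : Matrix (Fin (2 * n)) (Fin (2 * n)) ℂ, A.PosDef →
      ∀ T : Matrix (Fin (2 * n)) (Fin (2 * n)) ℂ,
        LoewnerLE (Tᴴ * T) 1 → LoewnerLE (Tᴴ * A * T) A →
        LoewnerLE (Tᴴ * matFunCalc h A * T) (matFunCalc h A)) :
    ∀ A₁ A₂ : Matrix (Fin n) (Fin n) ℂ, A₁.PosDef → A₂.PosDef →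
      LoewnerLE A₁ A₂ → LoewnerLE (matFunCalc h A₁) (matFunCalc h A₂) :=
  interpolation_implies_monotone_general n h hyp
end

section
/- Let n be a positive integer and h : (0,∞) → (0,∞). (1) If for every positive definite Hermitian A ∈ M_{3n}(ℂ) and every T ∈ M_{3n}(ℂ) the conditions TᴴT ≤ I and TᴴAT ≤ A imply Tᴴh(A)T ≤ h(A), then h is matrix concave of order n: λ·h(A₁) + (1−λ)·h(A₂) ≤ h(λA₁ + (1−λ)A₂) for all λ ∈ [0,1] and all positive definite Hermitian A₁, A₂ ∈ Mₙ(ℂ). (2) If h is matrix concave of order n, then h is matrix monotone of order n: A₁ ≤ A₂ (positive definite Hermitian in Mₙ(ℂ)) implies h(A₁) ≤ h(A₂). -/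
open Matrix MeasureTheory
open scoped ComplexOrder

/-!
Part (1): put `B = l • A₁ + (1 - l) • A₂` and `A = B ⊕ A₁ ⊕ A₂`, positive definite of order
`3n`. The contraction `T (x, y) = (0, C x)`, where `C x = (√l x, √(1 - l) x)` is an isometry,
satisfies `Tᴴ T ≤ 1` and `Tᴴ A T = Cᴴ (A₁ ⊕ A₂) C ⊕ 0 = B ⊕ 0 ≤ A`. As `h` acts blockwise,
`h(A) - Tᴴ h(A) T = (h(B) - l • h(A₁) - (1 - l) • h(A₂)) ⊕ h(A₁) ⊕ h(A₂)`, and the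
interpolation property makes its first block positive semidefinite.

Part (2): for `0 < l < 1` write `A₂ = l • A₁ + (1 - l) • C` with `C = (A₂ - l • A₁) / (1 - l)`,
which is positive definite because `A₁ ≤ A₂`. Concavity and `h(C) ≥ 0` give
`l • h(A₁) ≤ h(A₂)`; let `l → 1` in the closed cone of positive semidefinite matrices.
-/

open Filter Topology
namespace Matrix

variable {𝕜 ι κ : Type*} [RCLike 𝕜] [Fintype ι] [Fintype κ]

theorem PosSemidef.fromBlocks_zero {A : Matrix ι ι 𝕜} {D : Matrix κ κ 𝕜}
    (hA : A.PosSemidef) (hD : D.PosSemidef) : (fromBlocks A 0 0 D).PosSemidef := by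
  refine .of_dotProduct_mulVec_nonneg (hA.1.fromBlocks (by simp) hD.1) fun x => ?_
  rw [← Sum.elim_comp_inl_inr x]
  simp only [fromBlocks_mulVec, zero_mulVec, add_zero, zero_add, Function.star_sumElim,
    Sum.elim_comp_inl, Sum.elim_comp_inr, sumElim_dotProduct_sumElim]
  exact add_nonneg (hA.dotProduct_mulVec_nonneg _) (hD.dotProduct_mulVec_nonneg _)

theorem PosDef.fromBlocks_zero [DecidableEq ι] [DecidableEq κ] {A : Matrix ι ι 𝕜}
    {D : Matrix κ κ 𝕜} (hA : A.PosDef) (hD : D.PosDef) : (fromBlocks A 0 0 D).PosDef := by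
  refine (hA.posSemidef.fromBlocks_zero hD.posSemidef).posDef_iff_det_ne_zero.2 ?_
  rw [det_fromBlocks_zero₂₁]
  exact mul_ne_zero hA.det_pos.ne' hD.det_pos.ne'

omit [Fintype ι] in
theorem PosDef.smul_add_one_sub_smul {A B : Matrix ι ι 𝕜} (hA : A.PosDef) (hB : B.PosDef)
    {l : ℝ} (hl : l ∈ Set.Icc (0 : ℝ) 1) : (l • A + (1 - l) • B).PosDef := by
  rcases hl.1.eq_or_lt with rfl | hl₀
  · simpa using hB
  · exact (hA.smul hl₀).add_posSemidef (hB.posSemidef.smul (sub_nonneg.2 hl.2))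

theorem isClosed_setOf_posSemidef : IsClosed {M : Matrix ι ι 𝕜 | M.PosSemidef} := by
  have : {M : Matrix ι ι 𝕜 | M.PosSemidef} =
      {M | Mᴴ = M} ∩ ⋂ x : ι → 𝕜, {M | 0 ≤ star x ⬝ᵥ M *ᵥ x} := by
    ext M
    simp [posSemidef_iff_dotProduct_mulVec, IsHermitian]
  rw [this]
  refine (isClosed_eq (by fun_prop) continuous_id).inter (isClosed_iInter fun x => ?_)
  exact isClosed_le continuous_const
    (continuous_const.dotProduct (continuous_id.matrix_mulVec continuous_const))

theorem PosSemidef.sub_of_forall_lt_one {X Y : Matrix ι ι 𝕜}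
    (h : ∀ l ∈ Set.Ioo (0 : ℝ) 1, (Y - l • X).PosSemidef) : (Y - X).PosSemidef := by
  have hcont : Continuous fun l : ℝ => Y - l • X := by fun_prop
  have hlim : Tendsto (fun l : ℝ => Y - l • X) (𝓝[<] 1) (𝓝 (Y - X)) := by
    simpa using (hcont.tendsto 1).mono_left nhdsWithin_le_nhds
  exact isClosed_setOf_posSemidef.mem_of_tendsto hlim
    (eventually_of_mem (Ioo_mem_nhdsLT zero_lt_one) h)

theorem fromBlocks_sub_conj_fromBlocks_zero {α : Type*} [Ring α] [StarRing α]
    (Z : Matrix ι ι α) (D : Matrix κ κ α) (C : Matrix κ ι α) :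
    fromBlocks Z 0 0 D - (fromBlocks 0 0 C 0)ᴴ * fromBlocks Z 0 0 D * fromBlocks 0 0 C 0 =
      fromBlocks (Z - Cᴴ * D * C) 0 0 D := by
  simp [fromBlocks_conjTranspose, fromBlocks_multiply, sub_eq_add_neg, fromBlocks_neg,
    fromBlocks_add]

variable [DecidableEq ι] [DecidableEq κ]

def IsFunCalc (h : ℝ → ℝ) (A F : Matrix ι ι 𝕜) : Prop :=
  ∃ U ∈ unitaryGroup ι 𝕜, ∃ d : ι → ℝ,
    A = U * diagonal (fun i => (d i : 𝕜)) * star U ∧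
      F = U * diagonal (fun i => (h (d i) : 𝕜)) * star U

theorem diagonal_comp_mul_eq_mul_diagonal_comp {d : ι → ℝ} {e : κ → ℝ} {W : Matrix ι κ 𝕜}
    (hW : diagonal (fun i => (d i : 𝕜)) * W = W * diagonal (fun j => (e j : 𝕜)))
    (h : ℝ → ℝ) :
    diagonal (fun i => (h (d i) : 𝕜)) * W = W * diagonal (fun j => (h (e j) : 𝕜)) := by
  ext i j
  have hij := congrFun (congrFun hW i) j
  simp only [diagonal_mul, mul_diagonal] at hij ⊢
  by_cases hW0 : W i j = 0
  · simp [hW0]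
  · have hde : d i = e j := by
      exact_mod_cast mul_right_cancel₀ hW0 (hij.trans (mul_comm _ _))
    rw [hde, mul_comm]

theorem IsFunCalc.unique {h : ℝ → ℝ} {A F G : Matrix ι ι 𝕜} (hF : IsFunCalc h A F)
    (hG : IsFunCalc h A G) : F = G := by
  obtain ⟨U, hU, d, rfl, rfl⟩ := hF
  obtain ⟨V, hV, e, hA, rfl⟩ := hG
  have hW : diagonal (fun i => (d i : 𝕜)) * (star U * V) =
      (star U * V) * diagonal (fun i => (e i : 𝕜)) := by
    calc _ = star U * (U * diagonal (fun i => (d i : 𝕜)) * star U) * V := by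
            simp only [← mul_assoc, Unitary.star_mul_self_of_mem hU, one_mul]
      _ = star U * (V * diagonal (fun i => (e i : 𝕜)) * star V) * V := by rw [hA]
      _ = _ := by simp only [mul_assoc, Unitary.star_mul_self_of_mem hV, mul_one]
  calc U * diagonal (fun i => (h (d i) : 𝕜)) * star U
      = U * (diagonal (fun i => (h (d i) : 𝕜)) * (star U * V)) * star V := by
        simp only [mul_assoc, Unitary.mul_star_self_of_mem hV, mul_one]
    _ = U * ((star U * V) * diagonal (fun i => (h (e i) : 𝕜))) * star V := by
        rw [diagonal_comp_mul_eq_mul_diagonal_comp hW h]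
    _ = V * diagonal (fun i => (h (e i) : 𝕜)) * star V := by
        simp only [← mul_assoc, Unitary.mul_star_self_of_mem hU, one_mul]

theorem IsFunCalc.isHermitian {h : ℝ → ℝ} {A F : Matrix ι ι 𝕜} (hF : IsFunCalc h A F) :
    A.IsHermitian := by
  obtain ⟨U, -, d, rfl, -⟩ := hF
  rw [star_eq_conjTranspose]
  exact isHermitian_mul_mul_conjTranspose _ (isHermitian_diagonal_of_self_adjoint _
    (by ext i; simp))

theorem IsFunCalc.fromBlocks {h : ℝ → ℝ} {A F : Matrix ι ι 𝕜} {B G : Matrix κ κ 𝕜}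
    (hA : IsFunCalc h A F) (hB : IsFunCalc h B G) :
    IsFunCalc h (fromBlocks A 0 0 B) (fromBlocks F 0 0 G) := by
  obtain ⟨U, hU, d, rfl, rfl⟩ := hA
  obtain ⟨V, hV, e, rfl, rfl⟩ := hB
  refine ⟨Matrix.fromBlocks U 0 0 V, ?_, Sum.elim d e, ?_, ?_⟩
  · rw [mem_unitaryGroup_iff, star_eq_conjTranspose, fromBlocks_conjTranspose,
      fromBlocks_multiply]
    simp [← star_eq_conjTranspose, Unitary.mul_star_self_of_mem hU,
      Unitary.mul_star_self_of_mem hV]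
  all_goals
    rw [← Sum.elim_comp_inl_inr (fun _ => _)]
    simp only [Function.comp_def, Sum.elim_inl, Sum.elim_inr, ← fromBlocks_diagonal,
      star_eq_conjTranspose, fromBlocks_conjTranspose,
      conjTranspose_zero, fromBlocks_multiply, Matrix.mul_zero, Matrix.zero_mul, add_zero,
      zero_add]

theorem IsFunCalc.reindex {h : ℝ → ℝ} {A F : Matrix ι ι 𝕜} (hF : IsFunCalc h A F)
    (e : ι ≃ κ) : IsFunCalc h (reindex e e A) (reindex e e F) := by
  obtain ⟨U, hU, d, rfl, rfl⟩ := hF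
  let ρ := reindexAlgEquiv 𝕜 𝕜 e
  have hρstar : ∀ M, ρ (star M) = star (ρ M) := fun M => by simp [ρ, star_eq_conjTranspose]
  have hρdiag : ∀ f : ι → 𝕜, ρ (diagonal f) = diagonal (f ∘ e.symm) := fun f => by
    simp [ρ, submatrix_diagonal_equiv]
  refine ⟨ρ U, ?_, d ∘ e.symm, ?_, ?_⟩
  · rw [mem_unitaryGroup_iff, ← hρstar, ← map_mul, Unitary.mul_star_self_of_mem hU, map_one]
  all_goals
    rw [← coe_reindexAlgEquiv 𝕜 𝕜]
    simp only [map_mul, hρstar, hρdiag, ρ]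
    rfl

noncomputable def sqrtWeights (𝕜 κ : Type*) [RCLike 𝕜] [DecidableEq κ] (l : ℝ) :
    Matrix (κ ⊕ κ) κ 𝕜 :=
  fromRows (√l • 1) (√(1 - l) • 1)

theorem sqrtWeights_conj_fromBlocks {l : ℝ} (hl : l ∈ Set.Icc (0 : ℝ) 1) (X Y : Matrix κ κ 𝕜) :
    (sqrtWeights 𝕜 κ l)ᴴ * fromBlocks X 0 0 Y * sqrtWeights 𝕜 κ l = l • X + (1 - l) • Y := by
  have h₁ : √l * √l = l := Real.mul_self_sqrt hl.1
  have h₂ : √(1 - l) * √(1 - l) = 1 - l := Real.mul_self_sqrt (sub_nonneg.2 hl.2)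
  rw [sqrtWeights, conjTranspose_fromRows_eq_fromCols_conjTranspose, Matrix.mul_assoc,
    fromBlocks_mul_fromRows, fromCols_mul_fromRows]
  simp [smul_smul, h₁, h₂]

theorem conjTranspose_sqrtWeights_mul_self {l : ℝ} (hl : l ∈ Set.Icc (0 : ℝ) 1) :
    (sqrtWeights 𝕜 κ l)ᴴ * sqrtWeights 𝕜 κ l = 1 := by
  simpa [← add_smul] using sqrtWeights_conj_fromBlocks hl (1 : Matrix κ κ 𝕜) 1

end Matrix

theorem isFunCalc_matFunCalc {m : ℕ} {A : Matrix (Fin m) (Fin m) ℂ} (hA : A.IsHermitian)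
    (h : ℝ → ℝ) : IsFunCalc h A (matFunCalc h A) :=
  ⟨_, hA.eigenvectorUnitary.2, hA.eigenvalues, hA.spectral_theorem, dif_pos hA⟩

theorem Matrix.IsFunCalc.matFunCalc_eq {m : ℕ} {h : ℝ → ℝ} {A F : Matrix (Fin m) (Fin m) ℂ}
    (hF : IsFunCalc h A F) : matFunCalc h A = F :=
  (isFunCalc_matFunCalc hF.isHermitian h).unique hF

theorem matFunCalc_posSemidef {m : ℕ} {h : ℝ → ℝ} (hh : ∀ x, 0 < x → 0 ≤ h x)
    {A : Matrix (Fin m) (Fin m) ℂ} (hA : A.PosDef) : (matFunCalc h A).PosSemidef := by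
  rw [matFunCalc, dif_pos hA.1, star_eq_conjTranspose]
  refine PosSemidef.mul_mul_conjTranspose_same ?_ _
  exact posSemidef_diagonal_iff.2 fun i => by exact_mod_cast hh _ (hA.eigenvalues_pos i)

theorem loewnerLE_iff {m : ℕ} {A B : Matrix (Fin m) (Fin m) ℂ} :
    LoewnerLE A B ↔ (B - A).PosSemidef := Iff.rfl

/-- The class `C_m` of the paper. -/
def IsMatrixInterpolation (m : ℕ) (h : ℝ → ℝ) : Prop :=
  ∀ A : Matrix (Fin m) (Fin m) ℂ, A.PosDef → ∀ T : Matrix (Fin m) (Fin m) ℂ,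
    LoewnerLE (Tᴴ * T) 1 → LoewnerLE (Tᴴ * A * T) A →
      LoewnerLE (Tᴴ * matFunCalc h A * T) (matFunCalc h A)

/-- The class `Γ_n` of the paper. -/
def IsMatrixConcave (n : ℕ) (h : ℝ → ℝ) : Prop :=
  ∀ l : ℝ, l ∈ Set.Icc (0 : ℝ) 1 →
    ∀ A₁ A₂ : Matrix (Fin n) (Fin n) ℂ, A₁.PosDef → A₂.PosDef →
      LoewnerLE (l • matFunCalc h A₁ + (1 - l) • matFunCalc h A₂)
        (matFunCalc h (l • A₁ + (1 - l) • A₂))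

/-- The class `P'_n` of the paper. -/
def IsMatrixMonotone (n : ℕ) (h : ℝ → ℝ) : Prop :=
  ∀ A₁ A₂ : Matrix (Fin n) (Fin n) ℂ, A₁.PosDef → A₂.PosDef →
    LoewnerLE A₁ A₂ → LoewnerLE (matFunCalc h A₁) (matFunCalc h A₂)

theorem IsMatrixInterpolation.posSemidef_sub_conj {ι : Type*} [Fintype ι] [DecidableEq ι]
    {m : ℕ} {h : ℝ → ℝ} (hC : IsMatrixInterpolation m h) (e : ι ≃ Fin m)
    {A F T : Matrix ι ι ℂ} (hA : A.PosDef) (hF : IsFunCalc h A F)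
    (hT : (1 - Tᴴ * T).PosSemidef) (hTA : (A - Tᴴ * A * T).PosSemidef) :
    (F - Tᴴ * F * T).PosSemidef := by
  let ρ := reindexAlgEquiv ℂ ℂ e
  have hρ : ∀ X, (ρ X).PosSemidef ↔ X.PosSemidef := fun X => posSemidef_submatrix_equiv e.symm
  have hρH : ∀ X, ρ Xᴴ = (ρ X)ᴴ := fun X => by simp [ρ]
  rw [← hρ] at hT hTA ⊢
  simp only [map_sub, map_mul, map_one, hρH] at hT hTA ⊢
  have hFC := hC (ρ A) (hA.submatrix e.symm.injective) (ρ T) hT hTA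
  rwa [loewnerLE_iff, coe_reindexAlgEquiv, (hF.reindex e).matFunCalc_eq] at hFC

theorem IsMatrixInterpolation.isMatrixConcave {n : ℕ} {h : ℝ → ℝ}
    (hC : IsMatrixInterpolation (3 * n) h) : IsMatrixConcave n h := by
  intro l hl A₁ A₂ hA₁ hA₂
  let e : Fin n ⊕ (Fin n ⊕ Fin n) ≃ Fin (3 * n) :=
    (Equiv.sumCongr (.refl _) finSumFinEquiv).trans <| finSumFinEquiv.trans <| finCongr (by ring)
  let T : Matrix (Fin n ⊕ (Fin n ⊕ Fin n)) (Fin n ⊕ (Fin n ⊕ Fin n)) ℂ :=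
    fromBlocks 0 0 (sqrtWeights ℂ (Fin n) l) 0
  have hB := hA₁.smul_add_one_sub_smul hA₂ hl
  have hFC := hC.posSemidef_sub_conj e (T := T) (hB.fromBlocks_zero (hA₁.fromBlocks_zero hA₂))
    ((isFunCalc_matFunCalc hB.1 h).fromBlocks
      ((isFunCalc_matFunCalc hA₁.1 h).fromBlocks (isFunCalc_matFunCalc hA₂.1 h))) ?_ ?_
  · rw [fromBlocks_sub_conj_fromBlocks_zero, sqrtWeights_conj_fromBlocks hl] at hFC
    exact hFC.submatrix Sum.inl
  · have hT := fromBlocks_sub_conj_fromBlocks_zero 1 1 (sqrtWeights ℂ (Fin n) l)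
    simp only [fromBlocks_one, Matrix.mul_one, conjTranspose_sqrtWeights_mul_self hl,
      sub_self] at hT
    rw [hT]
    exact PosSemidef.zero.fromBlocks_zero PosSemidef.one
  · rw [fromBlocks_sub_conj_fromBlocks_zero, sqrtWeights_conj_fromBlocks hl, sub_self]
    exact PosSemidef.zero.fromBlocks_zero (hA₁.posSemidef.fromBlocks_zero hA₂.posSemidef)

theorem IsMatrixConcave.isMatrixMonotone {n : ℕ} {h : ℝ → ℝ} (hh : ∀ x, 0 < x → 0 ≤ h x)
    (hc : IsMatrixConcave n h) : IsMatrixMonotone n h := by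
  intro A₁ A₂ hA₁ hA₂ hle
  refine PosSemidef.sub_of_forall_lt_one fun l hl => ?_
  have hl₁ : 0 < 1 - l := sub_pos.2 hl.2
  set C := (1 - l)⁻¹ • (A₂ - l • A₁)
  have hC : C.PosDef := by
    refine PosDef.smul ?_ (inv_pos.2 hl₁)
    rw [show A₂ - l • A₁ = (1 - l) • A₁ + (A₂ - A₁) by module]
    exact (hA₁.smul hl₁).add_posSemidef hle
  have hA₂C : l • A₁ + (1 - l) • C = A₂ := by
    rw [smul_inv_smul₀ hl₁.ne']
    abel
  have hconc := hc l (Set.Ioo_subset_Icc_self hl) A₁ C hA₁ hC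
  rw [hA₂C, loewnerLE_iff] at hconc
  rw [← sub_add_cancel (matFunCalc h A₂ - l • matFunCalc h A₁) ((1 - l) • matFunCalc h C),
    sub_sub]
  exact hconc.add ((matFunCalc_posSemidef hh hC).smul hl₁.le)

theorem interpolation_concave_monotone_general (n : ℕ)
    (h : ℝ → ℝ) (hpos : ∀ x : ℝ, 0 < x → 0 < h x) :
    ((∀ A : Matrix (Fin (3 * n)) (Fin (3 * n)) ℂ, A.PosDef →
        ∀ T : Matrix (Fin (3 * n)) (Fin (3 * n)) ℂ,
          LoewnerLE (Tᴴ * T) 1 → LoewnerLE (Tᴴ * A * T) A →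
          LoewnerLE (Tᴴ * matFunCalc h A * T) (matFunCalc h A)) →
      ∀ l : ℝ, l ∈ Set.Icc (0 : ℝ) 1 →
        ∀ A₁ A₂ : Matrix (Fin n) (Fin n) ℂ, A₁.PosDef → A₂.PosDef →
          LoewnerLE (l • matFunCalc h A₁ + (1 - l) • matFunCalc h A₂)
            (matFunCalc h (l • A₁ + (1 - l) • A₂))) ∧
    ((∀ l : ℝ, l ∈ Set.Icc (0 : ℝ) 1 →
        ∀ A₁ A₂ : Matrix (Fin n) (Fin n) ℂ, A₁.PosDef → A₂.PosDef →
          LoewnerLE (l • matFunCalc h A₁ + (1 - l) • matFunCalc h A₂)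
            (matFunCalc h (l • A₁ + (1 - l) • A₂))) →
      ∀ A₁ A₂ : Matrix (Fin n) (Fin n) ℂ, A₁.PosDef → A₂.PosDef →
        LoewnerLE A₁ A₂ → LoewnerLE (matFunCalc h A₁) (matFunCalc h A₂)) :=
  ⟨IsMatrixInterpolation.isMatrixConcave,
    IsMatrixConcave.isMatrixMonotone fun x hx => (hpos x hx).le⟩

/-- inclusions `C_{3n} ⊆ Γ_n ⊆ P'_n`: (1) an exact interpolation
function for matrices of order `3n` is matrix concave of order `n`; (2) a matrix
concave function of order `n` is matrix monotone of order `n`. -/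
theorem interpolation_concave_monotone (n : ℕ) (hn : 0 < n)
    (h : ℝ → ℝ) (hpos : ∀ x : ℝ, 0 < x → 0 < h x) :
    ((∀ A : Matrix (Fin (3 * n)) (Fin (3 * n)) ℂ, A.PosDef →
        ∀ T : Matrix (Fin (3 * n)) (Fin (3 * n)) ℂ,
          LoewnerLE (Tᴴ * T) 1 → LoewnerLE (Tᴴ * A * T) A →
          LoewnerLE (Tᴴ * matFunCalc h A * T) (matFunCalc h A)) →
      ∀ l : ℝ, l ∈ Set.Icc (0 : ℝ) 1 →
        ∀ A₁ A₂ : Matrix (Fin n) (Fin n) ℂ, A₁.PosDef → A₂.PosDef →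
          LoewnerLE (l • matFunCalc h A₁ + (1 - l) • matFunCalc h A₂)
            (matFunCalc h (l • A₁ + (1 - l) • A₂))) ∧
    ((∀ l : ℝ, l ∈ Set.Icc (0 : ℝ) 1 →
        ∀ A₁ A₂ : Matrix (Fin n) (Fin n) ℂ, A₁.PosDef → A₂.PosDef →
          LoewnerLE (l • matFunCalc h A₁ + (1 - l) • matFunCalc h A₂)
            (matFunCalc h (l • A₁ + (1 - l) • A₂))) →
      ∀ A₁ A₂ : Matrix (Fin n) (Fin n) ℂ, A₁.PosDef → A₂.PosDef →
        LoewnerLE A₁ A₂ → LoewnerLE (matFunCalc h A₁) (matFunCalc h A₂)) :=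
  interpolation_concave_monotone_general n h hpos
end

section
/- Let M be a complex Hilbert space, δ > 0 and ε ≥ 0, and let A′, A″ be bounded self-adjoint operators on M with A′ ≥ δ·I, A″ ≥ δ·I, and ‖A′ − A″‖ ≤ ε. Then for every bounded operator T on M and every C ≥ 0 such that T*T ≤ C²·I and T*A′T ≤ C²·A′, one has T*A″T ≤ (1 + 2ε/δ)·C²·A″. -/
/-! The quadratic forms of `A′` and `A″` differ by at most `ε‖y‖²`. Passing from `A″` to `A′` at `T x`
and back at `x` (with `‖T x‖² ≤ C²‖x‖²`) costs `2εC²‖x‖²`, and `A″ ≥ δ` turns this into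
`(2ε/δ) C² ⟪A″x, x⟫`. -/

open RCLike in
theorem ContinuousLinearMap.re_inner_apply_self_le_add_of_norm_sub_le
    {𝕜 E : Type*} [RCLike 𝕜] [NormedAddCommGroup E] [InnerProductSpace 𝕜 E]
    {A B : E →L[𝕜] E} {ε : ℝ} (hAB : ‖A - B‖ ≤ ε) (x : E) :
    re (inner 𝕜 (A x) x) ≤ re (inner 𝕜 (B x) x) + ε * ‖x‖ ^ 2 := by
  have hdiff : re (inner 𝕜 (A x) x) - re (inner 𝕜 (B x) x) = re (inner 𝕜 ((A - B) x) x) := by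
    simp only [sub_apply, inner_sub_left, map_sub]
  have hbound : re (inner 𝕜 ((A - B) x) x) ≤ ε * ‖x‖ ^ 2 :=
    calc re (inner 𝕜 ((A - B) x) x) ≤ ‖(A - B) x‖ * ‖x‖ := re_inner_le_norm _ _
      _ ≤ ‖A - B‖ * ‖x‖ * ‖x‖ := by gcongr; exact (A - B).le_opNorm x
      _ ≤ ε * ‖x‖ ^ 2 := by rw [mul_assoc, ← sq]; gcongr
  linarith

theorem perturbation_lemma_general
    {M : Type*} [NormedAddCommGroup M] [InnerProductSpace ℂ M]
    (δ ε : ℝ) (hδ : 0 < δ) (hε : 0 ≤ ε)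
    (A' A'' : M →L[ℂ] M)
    (hA''δ : ∀ x : M, δ * ‖x‖ ^ 2 ≤ (inner ℂ (A'' x) x : ℂ).re)
    (hclose : ‖A' - A''‖ ≤ ε)
    (T : M →L[ℂ] M) (C : ℝ)
    (hT0 : ∀ x : M, ‖T x‖ ^ 2 ≤ C ^ 2 * ‖x‖ ^ 2)
    (hT1 : ∀ x : M, (inner ℂ (A' (T x)) (T x) : ℂ).re ≤ C ^ 2 * (inner ℂ (A' x) x : ℂ).re) :
    ∀ x : M, (inner ℂ (A'' (T x)) (T x) : ℂ).re ≤
      (1 + 2 * ε / δ) * C ^ 2 * (inner ℂ (A'' x) x : ℂ).re := by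
  have hA''A' := (norm_sub_rev A'' A').trans_le hclose
  intro x
  have hx : ‖x‖ ^ 2 ≤ (inner ℂ (A'' x) x).re / δ := by
    rw [le_div_iff₀ hδ, mul_comm]; exact hA''δ x
  calc (inner ℂ (A'' (T x)) (T x)).re
      ≤ (inner ℂ (A' (T x)) (T x)).re + ε * ‖T x‖ ^ 2 :=
        A''.re_inner_apply_self_le_add_of_norm_sub_le hA''A' (T x)
    _ ≤ C ^ 2 * (inner ℂ (A' x) x).re + ε * (C ^ 2 * ‖x‖ ^ 2) := by
        gcongr
        exacts [hT1 x, hT0 x]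
    _ ≤ C ^ 2 * ((inner ℂ (A'' x) x).re + ε * ‖x‖ ^ 2) + ε * (C ^ 2 * ‖x‖ ^ 2) := by
        gcongr
        exact A'.re_inner_apply_self_le_add_of_norm_sub_le hclose x
    _ = C ^ 2 * (inner ℂ (A'' x) x).re + 2 * ε * C ^ 2 * ‖x‖ ^ 2 := by ring
    _ ≤ C ^ 2 * (inner ℂ (A'' x) x).re + 2 * ε * C ^ 2 * ((inner ℂ (A'' x) x).re / δ) := by
        gcongr
    _ = (1 + 2 * ε / δ) * C ^ 2 * (inner ℂ (A'' x) x).re := by ring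

/-- Lemma 3.11: if `A′, A″ ≥ δ·I` are bounded self-adjoint
operators with `‖A′ − A″‖ ≤ ε`, and `T*T ≤ C²·I`, `T*A′T ≤ C²·A′`, then
`T*A″T ≤ (1 + 2ε/δ)·C²·A″` (all inequalities in the Loewner order, expressed via
quadratic forms). -/
theorem perturbation_lemma
    {M : Type*} [NormedAddCommGroup M] [InnerProductSpace ℂ M] [CompleteSpace M]
    (δ ε : ℝ) (hδ : 0 < δ) (hε : 0 ≤ ε)
    (A' A'' : M →L[ℂ] M) (hA' : IsSelfAdjoint A') (hA'' : IsSelfAdjoint A'')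
    (hA'δ : ∀ x : M, δ * ‖x‖ ^ 2 ≤ (inner ℂ (A' x) x : ℂ).re)
    (hA''δ : ∀ x : M, δ * ‖x‖ ^ 2 ≤ (inner ℂ (A'' x) x : ℂ).re)
    (hclose : ‖A' - A''‖ ≤ ε)
    (T : M →L[ℂ] M) (C : ℝ) (hC : 0 ≤ C)
    (hT0 : ∀ x : M, ‖T x‖ ^ 2 ≤ C ^ 2 * ‖x‖ ^ 2)
    (hT1 : ∀ x : M, (inner ℂ (A' (T x)) (T x) : ℂ).re ≤ C ^ 2 * (inner ℂ (A' x) x : ℂ).re) :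
    ∀ x : M, (inner ℂ (A'' (T x)) (T x) : ℂ).re ≤
      (1 + 2 * ε / δ) * C ^ 2 * (inner ℂ (A'' x) x : ℂ).re :=
  perturbation_lemma_general δ ε hδ hε A' A'' hA''δ hclose T C hT0 hT1
end

section
/- Let S be a nonempty subset of (0,∞) and let (h_k) be a sequence of functions of class P′, i.e., each h_k(λ) = c_k + ∫_{[0,∞)} (1+t)λ/(1+tλ) dρ_k(t) for some constant c_k ≥ 0 and finite positive Borel measure ρ_k on [0,∞). If h_k(λ) converges to a finite limit h(λ) for every λ ∈ S, then there exists a function g of class P′ with g(λ) = h(λ) for all λ ∈ S. -/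
/-!
The substitution `s = t / (1 + t)` compactifies `[0, ∞]` to `[0, 1]` and turns the functions of
class `P'` into `λ ↦ ∫ λ / (1 - s + s λ) dμ(s)` with `μ` a finite measure on `[0, 1]`, the atom
at `s = 1` (that is, `t = ∞`) carrying the constant `c`. The kernel is at least `min λ₀ 1`, so
evaluating at one point `λ₀ ∈ S` bounds the masses of the `μₖ`. Finite measures of bounded mass on
a compact space form a weakly compact set, and the kernel is continuous in `s`, so any weak cluster
point of the `μₖ` represents `h` on `S`.
-/

open MeasureTheory Filter

/-- A function is of class `P'` (positive Pick functions regular on `(0,∞)`) if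
`h(λ) = c + ∫_{[0,∞)} (1+t)λ/(1+tλ) dρ(t)` on `(0,∞)` for some constant `c ≥ 0`
and finite positive Borel measure `ρ` on `[0,∞)`. -/
def IsPickPos (h : ℝ → ℝ) : Prop :=
  ∃ c : ℝ, 0 ≤ c ∧ ∃ ρ : Measure ℝ, IsFiniteMeasure ρ ∧
    ∀ l : ℝ, 0 < l →
      h l = c + ∫ t in Set.Ici (0 : ℝ), ((1 + t) * l) / (1 + t * l) ∂ρ

open Set Topology unitInterval

theorem IsCompact.exists_forall_eq_of_tendsto {X Y ι κ : Type*} [TopologicalSpace X]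
    [TopologicalSpace Y] [T2Space Y] {K : Set X} (hK : IsCompact K) {l : Filter ι} [l.NeBot]
    {x : ι → X} (hx : ∀ i, x i ∈ K) {φ : κ → X → Y} (hφ : ∀ j, Continuous (φ j)) {y : κ → Y}
    (hy : ∀ j, Tendsto (fun i => φ j (x i)) l (𝓝 (y j))) :
    ∃ a ∈ K, ∀ j, φ j a = y j := by
  obtain ⟨a, haK, ha⟩ :=
    hK.exists_mapClusterPt (f := l) (tendsto_principal.2 (Eventually.of_forall hx))
  refine ⟨a, haK, fun j => eq_of_nhds_neBot ?_⟩
  exact ((ha.tendsto_comp ((hφ j).tendsto a)).neBot).mono (inf_le_inf_left _ (hy j))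

noncomputable def pickKernel (l s : ℝ) : ℝ := l / (1 - s + s * l)

lemma pickKernel_one {l : ℝ} (hl : l ≠ 0) : pickKernel l 1 = 1 := by
  simp [pickKernel, hl]

lemma pickKernel_denom_pos {l : ℝ} (hl : 0 < l) (s : I) : 0 < 1 - (s : ℝ) + s * l := by
  nlinarith [s.2.1, s.2.2, mul_nonneg s.2.1 hl.le]

lemma min_le_pickKernel {l : ℝ} (hl : 0 < l) (s : I) : min l 1 ≤ pickKernel l s := by
  rw [pickKernel, le_div_iff₀ (pickKernel_denom_pos hl s)]
  rcases le_total l 1 with h | h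
  · rw [min_eq_left h]
    nlinarith [mul_nonneg hl.le (mul_nonneg s.2.1 (sub_nonneg.2 h))]
  · rw [min_eq_right h]
    nlinarith [mul_nonneg (sub_nonneg.2 s.2.2) (sub_nonneg.2 h)]

lemma continuous_pickKernel {l : ℝ} (hl : 0 < l) : Continuous fun s : I => pickKernel l s :=
  continuous_const.div (by fun_prop) fun s => (pickKernel_denom_pos hl s).ne'

lemma integrable_pickKernel {l : ℝ} (hl : 0 < l) (μ : Measure I) [IsFiniteMeasure μ] :
    Integrable (fun s : I => pickKernel l s) μ :=
  (continuous_pickKernel hl).integrable_of_hasCompactSupport (HasCompactSupport.of_compactSpace _)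

lemma FiniteMeasure.mass_le_integral_pickKernel_div {l : ℝ} (hl : 0 < l) (μ : FiniteMeasure I) :
    (μ.mass : ℝ) ≤ (∫ s, pickKernel l s ∂(μ : Measure I)) / min l 1 := by
  rw [le_div_iff₀ (lt_min hl one_pos)]
  calc (μ.mass : ℝ) * min l 1 = ∫ _, min l 1 ∂(μ : Measure I) := by
        rw [integral_const, measureReal_def, ← FiniteMeasure.ennreal_mass, ENNReal.coe_toReal,
          smul_eq_mul]
    _ ≤ ∫ s, pickKernel l s ∂(μ : Measure I) :=
        integral_mono (integrable_const _) (integrable_pickKernel hl _) (min_le_pickKernel hl)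

lemma pickKernel_div_one_add {l t : ℝ} (ht : 0 ≤ t) :
    pickKernel l (t / (1 + t)) = (1 + t) * l / (1 + t * l) := by
  have : 1 - t / (1 + t) + t / (1 + t) * l = (1 + t * l) / (1 + t) := by
    field_simp
    ring
  rw [pickKernel, this, div_div_eq_mul_div, mul_comm]

lemma pickKernel_eq_div_one_sub {l s : ℝ} (hl : 0 < l) (hs : 0 ≤ s) (hs1 : s < 1) :
    pickKernel l s = (1 + s / (1 - s)) * l / (1 + s / (1 - s) * l) := by
  have h1 : 0 < 1 - s := by linarith
  have h2 : 0 < 1 - s + s * l := by nlinarith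
  rw [pickKernel]
  field_simp
  ring

noncomputable def toUnitInterval (t : ℝ) : I := projIcc 0 1 zero_le_one (t / (1 + t))

lemma measurable_toUnitInterval : Measurable toUnitInterval :=
  continuous_projIcc.measurable.comp (by fun_prop)

lemma coe_toUnitInterval {t : ℝ} (ht : 0 ≤ t) : (toUnitInterval t : ℝ) = t / (1 + t) := by
  rw [toUnitInterval, projIcc_of_mem]
  refine ⟨by positivity, (div_le_one (by positivity)).2 (by linarith)⟩

lemma IsPickPos.exists_finiteMeasure {h : ℝ → ℝ} (hh : IsPickPos h) :
    ∃ μ : FiniteMeasure I, ∀ l, 0 < l → h l = ∫ s, pickKernel l s ∂(μ : Measure I) := by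
  obtain ⟨c, hc, ρ, hρ, hρh⟩ := hh
  let ν : Measure I := (ρ.restrict (Ici 0)).map toUnitInterval
  refine ⟨⟨ν + c.toNNReal • Measure.dirac 1, inferInstance⟩, fun l hl => ?_⟩
  have hν : ∫ s, pickKernel l s ∂ν = ∫ t in Ici (0 : ℝ), (1 + t) * l / (1 + t * l) ∂ρ := by
    rw [integral_map measurable_toUnitInterval.aemeasurable
      (integrable_pickKernel hl ν).aestronglyMeasurable]
    refine setIntegral_congr_fun measurableSet_Ici fun t ht => ?_
    rw [coe_toUnitInterval ht, pickKernel_div_one_add ht]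
  rw [FiniteMeasure.toMeasure_mk, integral_add_measure (integrable_pickKernel hl _)
    (integrable_pickKernel hl _), integral_smul_nnreal_measure, integral_dirac, hν, hρh l hl,
    Set.Icc.coe_one, pickKernel_one hl.ne', NNReal.smul_def, Real.coe_toNNReal _ hc, smul_eq_mul,
    mul_one, add_comm]

lemma isPickPos_integral_pickKernel (μ : Measure I) [IsFiniteMeasure μ] :
    IsPickPos fun l => ∫ s, pickKernel l s ∂μ := by
  let j : I → ℝ := fun s => s / (1 - s)
  have hj : Measurable j := by fun_prop
  refine ⟨μ.real {1}, measureReal_nonneg, (μ.restrict {1}ᶜ).map j, inferInstance, fun l hl => ?_⟩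
  -- `j 1 = 1 / 0 = 0`, so `j` maps all of `I` into `[0, ∞)`.
  have hj0 : j ⁻¹' Ici 0 = univ := eq_univ_of_forall fun s =>
    div_nonneg s.2.1 (sub_nonneg.2 s.2.2)
  show ∫ s, pickKernel l s ∂μ = _
  rw [setIntegral_map measurableSet_Ici (Measurable.aestronglyMeasurable (by fun_prop))
    hj.aemeasurable, hj0, Measure.restrict_univ,
    ← integral_add_compl (measurableSet_singleton 1) (integrable_pickKernel hl μ),
    integral_singleton, Set.Icc.coe_one, pickKernel_one hl.ne', smul_eq_mul, mul_one]
  congr 1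
  refine setIntegral_congr_fun (measurableSet_singleton 1).compl fun s hs => ?_
  exact pickKernel_eq_div_one_sub hl s.2.1 (lt_of_le_of_ne s.2.2 (fun h => hs (Subtype.ext h)))

/-- Lemma 3.10 (i): the class `P'|S` is closed under pointwise
convergence: if a sequence of `P'` functions converges pointwise on `S ⊆ (0,∞)`
to `h`, then `h` agrees on `S` with some `P'` function. -/
theorem pick_class_closed_under_pointwise_convergence
    (S : Set ℝ) (hS : S.Nonempty) (hS' : S ⊆ Set.Ioi (0 : ℝ))
    (hk : ℕ → ℝ → ℝ) (hhk : ∀ k, IsPickPos (hk k))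
    (h : ℝ → ℝ)
    (hconv : ∀ l ∈ S, Tendsto (fun k => hk k l) atTop (nhds (h l))) :
    ∃ g : ℝ → ℝ, IsPickPos g ∧ ∀ l ∈ S, g l = h l := by
  choose μ hμ using fun k => (hhk k).exists_finiteMeasure
  obtain ⟨l₀, hl₀⟩ := hS
  obtain ⟨M, hM⟩ := (hconv l₀ hl₀).bddAbove_range
  have hmass : ∀ k, (μ k).mass ≤ (M / min l₀ 1).toNNReal := fun k => by
    rw [← Real.toNNReal_coe (r := (μ k).mass)]
    refine Real.toNNReal_le_toNNReal
      ((FiniteMeasure.mass_le_integral_pickKernel_div (hS' hl₀) _).trans ?_)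
    rw [← hμ k l₀ (hS' hl₀)]
    exact div_le_div_of_nonneg_right (hM ⟨k, rfl⟩) (lt_min (hS' hl₀) one_pos).le
  obtain ⟨ν, -, hν⟩ := (isCompact_setOfPred_finiteMeasure_le_of_compactSpace I _)
    |>.exists_forall_eq_of_tendsto hmass
    (φ := fun (l : S) (ν : FiniteMeasure I) => ∫ s, pickKernel l s ∂(ν : Measure I))
    (fun l => FiniteMeasure.continuous_integral_continuousMap
      (⟨_, continuous_pickKernel (hS' l.2)⟩ : C(I, ℝ)))
    (fun l => (hconv l l.2).congr fun k => hμ k l (hS' l.2))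
  exact ⟨_, isPickPos_integral_pickKernel ν, fun l hl => hν ⟨l, hl⟩⟩
end

section
/- Let 1 < p < ∞, let λ₁, …, λₙ be positive reals, and for x ∈ ℂⁿ and t > 0 define K_p(t, x) = inf{ ∑ᵢ |(x₀)ᵢ|^p + t·∑ᵢ λᵢ|(x₁)ᵢ|^p : x = x₀ + x₁, x₀, x₁ ∈ ℂⁿ }. Then for all x ∈ ℂⁿ and t > 0, K_p(t, x) = ∑ᵢ |xᵢ|^p · tλᵢ / (1 + (tλᵢ)^{1/(p−1)})^{p−1}. -/
/-!
The problem decouples coordinatewise into the scalar problem of minimising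
`‖z₀‖ ^ p + c * ‖z₁‖ ^ p` over `z₀ + z₁ = z`. Writing `c = u ^ (p - 1)`, convexity of
`s ↦ s ^ p` applied to `a + b = u/(1+u) · (a(1+u)/u) + 1/(1+u) · (b(1+u))` gives the lower bound
`‖z‖ ^ p * c / (1 + u) ^ (p - 1)`, and the split `z₀ = u/(1+u) • z`, `z₁ = 1/(1+u) • z`
(where `‖z₀‖ ^ (p-1) = c ‖z₁‖ ^ (p-1)`, the first-order condition) attains it.
-/

open Real Finset

lemma rpow_eq_rpow_sub_one_mul {x : ℝ} (hx : x ≠ 0) (p : ℝ) : x ^ p = x ^ (p - 1) * x := by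
  rw [← rpow_add_one hx, sub_add_cancel]

section Splitting

variable {p u : ℝ}

lemma rpow_sub_one_mul_add_rpow_le (hp : 1 ≤ p) (hu : 0 < u) {a b : ℝ} (ha : 0 ≤ a)
    (hb : 0 ≤ b) :
    u ^ (p - 1) * (a + b) ^ p ≤ (1 + u) ^ (p - 1) * (a ^ p + u ^ (p - 1) * b ^ p) := by
  have h1u : 0 < 1 + u := by linarith
  have hconv := (convexOn_rpow hp).2 (Set.mem_Ici.2 (by positivity : 0 ≤ a * (1 + u) / u))
    (Set.mem_Ici.2 (by positivity : 0 ≤ b * (1 + u))) (div_pos hu h1u).le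
    (inv_pos.2 h1u).le (by field_simp; ring)
  have hmean : u / (1 + u) * (a * (1 + u) / u) + (1 + u)⁻¹ * (b * (1 + u)) = a + b := by
    field_simp
  simp only [smul_eq_mul, hmean] at hconv
  rw [div_rpow (by positivity) hu.le, mul_rpow ha h1u.le, mul_rpow hb h1u.le,
    rpow_eq_rpow_sub_one_mul h1u.ne' p, rpow_eq_rpow_sub_one_mul hu.ne' p] at hconv
  have huq : 0 < u ^ (p - 1) := rpow_pos_of_pos hu _
  calc u ^ (p - 1) * (a + b) ^ p
      ≤ u ^ (p - 1) * (u / (1 + u) * (a ^ p * ((1 + u) ^ (p - 1) * (1 + u)) / (u ^ (p - 1) * u))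
          + (1 + u)⁻¹ * (b ^ p * ((1 + u) ^ (p - 1) * (1 + u)))) := by gcongr
    _ = (1 + u) ^ (p - 1) * (a ^ p + u ^ (p - 1) * b ^ p) := by field_simp

lemma norm_rpow_add_mul_norm_rpow_optimal_split (hu : 0 < u) {E : Type*}
    [SeminormedAddCommGroup E] [NormedSpace ℝ E] (z : E) :
    ‖(u / (1 + u)) • z‖ ^ p + u ^ (p - 1) * ‖(1 + u)⁻¹ • z‖ ^ p
      = ‖z‖ ^ p * u ^ (p - 1) / (1 + u) ^ (p - 1) := by
  have h1u : 0 < 1 + u := by linarith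
  rw [norm_smul, norm_smul, norm_of_nonneg (by positivity), norm_of_nonneg (by positivity),
    mul_rpow (by positivity) (norm_nonneg _), mul_rpow (by positivity) (norm_nonneg _),
    div_rpow hu.le h1u.le, inv_rpow h1u.le, rpow_eq_rpow_sub_one_mul h1u.ne' p,
    rpow_eq_rpow_sub_one_mul hu.ne' p]
  have : 0 < u ^ (p - 1) := rpow_pos_of_pos hu _
  have : 0 < (1 + u) ^ (p - 1) := rpow_pos_of_pos h1u _
  field_simp
  ring

end Splitting

def decompositionCosts {E : Type*} [Add E] (f : E → E → ℝ) (z : E) : Set ℝ :=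
  {r | ∃ z₀ z₁, z = z₀ + z₁ ∧ r = f z₀ z₁}

lemma isLeast_decompositionCosts_norm_rpow {p c : ℝ} (hp : 1 < p) (hc : 0 < c) {E : Type*}
    [SeminormedAddCommGroup E] [NormedSpace ℝ E] (z : E) :
    IsLeast (decompositionCosts (fun z₀ z₁ => ‖z₀‖ ^ p + c * ‖z₁‖ ^ p) z)
      (‖z‖ ^ p * c / (1 + c ^ (1 / (p - 1))) ^ (p - 1)) := by
  have hq : p - 1 ≠ 0 := by linarith
  obtain ⟨u, hu, rfl⟩ : ∃ u, 0 < u ∧ c = u ^ (p - 1) :=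
    ⟨c ^ (p - 1)⁻¹, rpow_pos_of_pos hc _, (rpow_inv_rpow hc.le hq).symm⟩
  rw [one_div, rpow_rpow_inv hu.le hq]
  have h1u : 0 < 1 + u := by linarith
  have hsplit : z = (u / (1 + u)) • z + (1 + u)⁻¹ • z := by
    rw [← add_smul, show u / (1 + u) + (1 + u)⁻¹ = 1 by field_simp; ring, one_smul]
  refine ⟨⟨_, _, hsplit, (norm_rpow_add_mul_norm_rpow_optimal_split hu z).symm⟩, ?_⟩
  rintro r ⟨z₀, z₁, rfl, rfl⟩
  rw [div_le_iff₀ (rpow_pos_of_pos h1u _), mul_comm _ (u ^ (p - 1)), mul_comm _ ((1 + u) ^ _)]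
  calc u ^ (p - 1) * ‖z₀ + z₁‖ ^ p ≤ u ^ (p - 1) * (‖z₀‖ + ‖z₁‖) ^ p := by
        gcongr
        exact norm_add_le _ _
    _ ≤ _ := rpow_sub_one_mul_add_rpow_le hp.le hu (norm_nonneg _) (norm_nonneg _)

lemma isLeast_decompositionCosts_pi {ι E : Type*} [Fintype ι] [Add E] {f : ι → E → E → ℝ}
    {m : ι → ℝ} {x : ι → E} (h : ∀ i, IsLeast (decompositionCosts (f i) (x i)) (m i)) :
    IsLeast (decompositionCosts (fun x₀ x₁ => ∑ i, f i (x₀ i) (x₁ i)) x) (∑ i, m i) := by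
  choose hmem hlow using h
  choose x₀ x₁ hsplit hcost using hmem
  refine ⟨⟨x₀, x₁, funext hsplit, by simp only [hcost]⟩, ?_⟩
  rintro r ⟨y₀, y₁, rfl, rfl⟩
  exact sum_le_sum fun i _ => hlow i ⟨y₀ i, y₁ i, rfl, rfl⟩

/-- explicit formula for the `K_p`-functional of the weighted
couple `(ℓ_pⁿ, ℓ_pⁿ(λ))`:
`K_p(t,x) = ∑ᵢ |xᵢ|^p·tλᵢ/(1+(tλᵢ)^{1/(p−1)})^{p−1}`. -/
theorem Kp_functional_formula (n : ℕ) (p : ℝ) (hp : 1 < p)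
    (lam : Fin n → ℝ) (hlam : ∀ i, 0 < lam i)
    (x : Fin n → ℂ) (t : ℝ) (ht : 0 < t) :
    sInf {r : ℝ | ∃ x₀ x₁ : Fin n → ℂ, x = x₀ + x₁ ∧
        r = ∑ i, ‖x₀ i‖ ^ p + t * ∑ i, lam i * ‖x₁ i‖ ^ p}
      = ∑ i, ‖x i‖ ^ p * (t * lam i) /
          (1 + (t * lam i) ^ (1 / (p - 1))) ^ (p - 1) := by
  have hcosts : {r : ℝ | ∃ x₀ x₁ : Fin n → ℂ, x = x₀ + x₁ ∧
      r = ∑ i, ‖x₀ i‖ ^ p + t * ∑ i, lam i * ‖x₁ i‖ ^ p}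
        = decompositionCosts (fun x₀ x₁ => ∑ i, (‖x₀ i‖ ^ p + t * lam i * ‖x₁ i‖ ^ p)) x := by
    simp only [decompositionCosts, sum_add_distrib, mul_sum, mul_assoc]
  rw [hcosts]
  exact (isLeast_decompositionCosts_pi fun i =>
    isLeast_decompositionCosts_norm_rpow hp (mul_pos ht (hlam i)) (x i)).csInf_eq
end
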